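/- For the line graph (path) with endpoints x and y at distance d(x,y) ≥ 2, W_h(m_x^α, m_y^α) = d(x,y)·h(1) − 2(h(1) − h(α)) for all α ∈ [0,1], and hence the h-LLY–Ricci curvature between the endpoints is κ̃(h;x,y) = 2h'(1)/(d(x,y)·h(1)). -/

import Mathlib

open Filter Set Classical

noncomputable section

/-- A hypergraph: a vertex type together with a family of hyperedges. -/
structure HGraph (V : Type*) where
  E : Set (Set V)

namespace HGraph

variable {V : Type*}

/-- Two distinct vertices are adjacent if some hyperedge contains both. -/
def Adj (H : HGraph V) (x y : V) : Prop :=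
  x ≠ y ∧ ∃ e ∈ H.E, x ∈ e ∧ y ∈ e

/-- There is a path of length `n` from `x` to `y` (each consecutive pair lies
in a common hyperedge). -/
def IsPath (H : HGraph V) (x y : V) (n : ℕ) : Prop :=
  ∃ f : ℕ → V, f 0 = x ∧ f n = y ∧ ∀ i < n, ∃ e ∈ H.E, f i ∈ e ∧ f (i + 1) ∈ e

/-- The graph distance on a hypergraph: the shortest length of a path. -/
def dist (H : HGraph V) (x y : V) : ℕ :=
  sInf {n | H.IsPath x y n}

def Connected (H : HGraph V) : Prop := ∀ x y : V, ∃ n, H.IsPath x y n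

def LocallyFinite (H : HGraph V) : Prop := ∀ x : V, {y | H.Adj x y}.Finite

/-- A hypergraph is simple if no hyperedge is contained in a different one. -/
def Simple (H : HGraph V) : Prop :=
  ∀ e₁ ∈ H.E, ∀ e₂ ∈ H.E, e₁ ≠ e₂ → ¬e₁ ⊆ e₂

/-- The degree of a vertex: the number of its neighbours. -/
def degree (H : HGraph V) (x : V) : ℕ := {y | H.Adj x y}.ncard

end HGraph

/-- A finitely supported probability function on `V`. -/
def IsProb {V : Type*} (μ : V → ℝ) : Prop :=
  (∀ v, 0 ≤ μ v) ∧ (Function.support μ).Finite ∧ ∑' v, μ v = 1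

/-- A coupling of two probability functions. -/
def IsCoupling {V : Type*} (π : V → V → ℝ) (μ ν : V → ℝ) : Prop :=
  (∀ x y, 0 ≤ π x y) ∧ (∀ x, ∑' y, π x y = μ x) ∧ (∀ y, ∑' x, π x y = ν y)

/-- The L¹-Wasserstein distance with respect to the graph distance of `H`. -/
def W1 {V : Type*} (H : HGraph V) (μ ν : V → ℝ) : ℝ :=
  sInf {c | ∃ π, IsCoupling π μ ν ∧
    c = ∑' p : V × V, (H.dist p.1 p.2 : ℝ) * π p.1 p.2}

/-- A sequence of probability measures from `μ` to `ν` each of whose increments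
is supported in a single hyperedge. -/
def WhAdmissible {V : Type*} (H : HGraph V) (μ ν : V → ℝ) (I : ℕ)
    (ξ : ℕ → V → ℝ) : Prop :=
  ξ 0 = μ ∧ ξ I = ν ∧ (∀ i ≤ I, IsProb (ξ i)) ∧
    ∀ i < I, ∃ e ∈ H.E, Function.support (fun v => ξ (i + 1) v - ξ i v) ⊆ e

/-- The new transport distance `W_h`. -/
def Wh {V : Type*} (H : HGraph V) (h : ℝ → ℝ) (μ ν : V → ℝ) : ℝ :=
  sInf {c | ∃ I ξ, WhAdmissible H μ ν I ξ ∧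
    c = ∑ i ∈ Finset.range I, h (W1 H (ξ i) (ξ (i + 1)))}

/-- Assumptions on the concave cost function `h`, with one-sided derivatives
`D0 = h'(0)` and `D1 = h'(1)`. -/
structure CostFn (h : ℝ → ℝ) (D0 D1 : ℝ) : Prop where
  nonneg : ∀ x ∈ Set.Icc (0 : ℝ) 1, 0 ≤ h x
  mono : MonotoneOn h (Set.Icc (0 : ℝ) 1)
  cont : ContinuousOn h (Set.Icc (0 : ℝ) 1)
  concave : ConcaveOn ℝ (Set.Icc (0 : ℝ) 1) h
  zero : h 0 = 0
  d0_pos : 0 < D0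
  d0 : Filter.Tendsto (fun t => h t / t) (nhdsWithin 0 (Set.Ioi 0)) (nhds D0)
  d1 : Filter.Tendsto (fun t => (h 1 - h t) / (1 - t))
    (nhdsWithin 1 (Set.Iio 1)) (nhds D1)

/-- The Dirac measure at a point, as a probability function. -/
def dirac {V : Type*} (x : V) : V → ℝ := fun v => if v = x then 1 else 0

/-- The `α`-lazy uniform random walk at `x`. -/
def rw {V : Type*} (H : HGraph V) (α : ℝ) (x : V) : V → ℝ :=
  fun v => if v = x then α else if H.Adj x v then (1 - α) / (H.degree x) else 0

/-- The `(α,h)`-Ollivier–Ricci curvature. -/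
def ORic {V : Type*} (H : HGraph V) (h : ℝ → ℝ) (α : ℝ) (x y : V) : ℝ :=
  1 - Wh H h (rw H α x) (rw H α y) / Wh H h (dirac x) (dirac y)

/-- The `h`-LLY–Ricci curvature. -/
def hLLY {V : Type*} (H : HGraph V) (h : ℝ → ℝ) (x y : V) : ℝ :=
  Filter.liminf (fun α => ORic H h α x y / (1 - α)) (nhdsWithin 1 (Set.Iio 1))

end

/-- The path graph on vertices `{0, 1, …, N}`, as a hypergraph whose
hyperedges are the pairs of consecutive vertices. -/
def pathH (N : ℕ) : HGraph (Fin (N + 1)) :=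
  ⟨{e | ∃ i : Fin N, e = {i.castSucc, i.succ}}⟩

/-!
On the path, `W₁` bounds the change of the mass lying to the right of each edge, and a step
supported in the edge `{k, k + 1}` changes only the `k`-th of these cut masses, by at most
`W₁ ≤ 1`. A concave `h` with `h 0 = 0` is subadditive, so every admissible sequence costs at
least `∑ₖ h |Δₖ|`, where `Δₖ` is the total change of the `k`-th cut mass; for the two lazy walks
`|Δₖ| = α` on the two end edges and `1` on the `N - 2` others. Moving `α` from `0` to `1`, the
unit mass from `1` to `N - 1` and `α` from `N - 1` to `N` attains this bound. Dividing the
curvature by `1 - α` then leaves `2 / (N h 1)` times the difference quotient of `h` at `1`.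
-/

open Topology

section Concave

variable {f : ℝ → ℝ}

theorem MonotoneOn.nonneg_of_apply_zero (hmono : MonotoneOn f (Icc 0 1))
    (h0 : f 0 = 0) {x : ℝ} (hx : x ∈ Icc (0 : ℝ) 1) : 0 ≤ f x :=
  h0 ▸ hmono (left_mem_Icc.2 zero_le_one) hx hx.1

theorem ConcaveOn.mul_le_map_mul (hf : ConcaveOn ℝ (Icc 0 1) f) (h0 : f 0 = 0) {c s : ℝ}
    (hc : c ∈ Icc (0 : ℝ) 1) (hs : s ∈ Icc (0 : ℝ) 1) : c * f s ≤ f (c * s) := by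
  have := hf.2 (left_mem_Icc.2 zero_le_one) hs (sub_nonneg.2 hc.2) hc.1 (by ring)
  simpa [h0] using this

theorem ConcaveOn.map_add_le (hf : ConcaveOn ℝ (Icc 0 1) f) (h0 : f 0 = 0) {a b : ℝ}
    (ha : 0 ≤ a) (hb : 0 ≤ b) (hab : a + b ≤ 1) : f (a + b) ≤ f a + f b := by
  rcases (add_nonneg ha hb).eq_or_lt with hs | hs
  · obtain rfl : a = 0 := by linarith
    obtain rfl : b = 0 := by linarith
    simp [h0]
  have hsI : a + b ∈ Icc (0 : ℝ) 1 := ⟨hs.le, hab⟩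
  have key : ∀ t, 0 ≤ t → t ≤ a + b → t / (a + b) * f (a + b) ≤ f t := fun t ht hts => by
    simpa [div_mul_cancel₀ t hs.ne'] using hf.mul_le_map_mul h0
      ⟨div_nonneg ht hs.le, (div_le_one hs).2 hts⟩ hsI
  calc f (a + b) = a / (a + b) * f (a + b) + b / (a + b) * f (a + b) := by
        rw [← add_mul, ← add_div, div_self hs.ne', one_mul]
    _ ≤ f a + f b := add_le_add (key a ha (by linarith)) (key b hb (by linarith))

theorem ConcaveOn.le_sum_of_le_sum (hf : ConcaveOn ℝ (Icc 0 1) f) (h0 : f 0 = 0)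
    (hmono : MonotoneOn f (Icc 0 1)) {ι : Type*} (s : Finset ι) {t : ι → ℝ}
    (ht : ∀ i ∈ s, t i ∈ Icc (0 : ℝ) 1) {F : ℝ} (hF : F ∈ Icc (0 : ℝ) 1)
    (hFt : F ≤ ∑ i ∈ s, t i) : f F ≤ ∑ i ∈ s, f (t i) := by
  induction s using Finset.induction_on generalizing F with
  | empty =>
    obtain rfl : F = 0 := le_antisymm (by simpa using hFt) hF.1
    simp [h0]
  | insert a s has ih =>
    rw [Finset.sum_insert has] at hFt ⊢
    have hta := ht a (Finset.mem_insert_self a s)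
    have hts : ∀ i ∈ s, t i ∈ Icc (0 : ℝ) 1 := fun i hi => ht i (Finset.mem_insert_of_mem hi)
    rcases le_or_gt F (t a) with hFa | hFa
    · have := Finset.sum_nonneg fun i hi => hmono.nonneg_of_apply_zero h0 (hts i hi)
      linarith [hmono hF hta hFa]
    · have hrest := ih hts (F := F - t a) ⟨by linarith, by linarith [hF.2, hta.1]⟩ (by linarith)
      calc f F = f (t a + (F - t a)) := by ring_nf
        _ ≤ f (t a) + f (F - t a) := hf.map_add_le h0 hta.1 (by linarith) (by linarith [hF.2])
        _ ≤ f (t a) + ∑ i ∈ s, f (t i) := by linarith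

end Concave

theorem IsProb.sum_eq_one {V : Type*} [Fintype V] {μ : V → ℝ} (hμ : IsProb μ) :
    ∑ v, μ v = 1 := by
  rw [← tsum_fintype (L := .unconditional _)]; exact hμ.2.2

theorem IsProb.of_sum_eq_one {V : Type*} [Fintype V] {μ : V → ℝ} (h0 : ∀ v, 0 ≤ μ v)
    (h1 : ∑ v, μ v = 1) : IsProb μ :=
  ⟨h0, Set.toFinite _, by rw [tsum_fintype]; exact h1⟩

theorem IsProb.le_one {V : Type*} [Fintype V] {μ : V → ℝ} (hμ : IsProb μ) (v : V) : μ v ≤ 1 :=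
  hμ.sum_eq_one ▸ Finset.single_le_sum (fun w _ => hμ.1 w) (Finset.mem_univ v)

namespace HGraph

variable {V : Type*} (H : HGraph V)

theorem dist_self (x : V) : H.dist x x = 0 :=
  Nat.sInf_eq_zero.2 <| Or.inl ⟨fun _ => x, rfl, rfl, fun _ hi => absurd hi (Nat.not_lt_zero _)⟩

theorem dist_le_one {e : Set V} (he : e ∈ H.E) {x y : V} (hx : x ∈ e) (hy : y ∈ e) :
    H.dist x y ≤ 1 :=
  Nat.sInf_le ⟨fun t => if t = 0 then x else y, by simp, by simp, fun i hi => by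
    obtain rfl : i = 0 := by omega
    exact ⟨e, he, by simpa using hx, by simpa using hy⟩⟩

variable {H} in
theorem one_le_dist (hH : H.Connected) {x y : V} (hxy : x ≠ y) : 1 ≤ H.dist x y := by
  refine Nat.one_le_iff_ne_zero.2 fun h0 => ?_
  rcases Nat.sInf_eq_zero.1 h0 with ⟨f, hf0, hfn, -⟩ | hempty
  · exact hxy (hf0.symm.trans hfn)
  · obtain ⟨n, hn⟩ := hH x y
    exact hempty.subset hn

end HGraph

section Wasserstein

variable {V : Type*} (H : HGraph V) {μ ν : V → ℝ}

theorem W1_nonneg : 0 ≤ W1 H μ ν :=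
  Real.sInf_nonneg fun _ ⟨_, hπ, hc⟩ =>
    hc ▸ tsum_nonneg fun _ => mul_nonneg (Nat.cast_nonneg _) (hπ.1 _ _)

variable [Fintype V]

theorem IsCoupling.sum_right {π : V → V → ℝ} (hπ : IsCoupling π μ ν) (x : V) :
    ∑ y, π x y = μ x := by
  rw [← tsum_fintype (L := .unconditional _)]; exact hπ.2.1 x

theorem IsCoupling.sum_left {π : V → V → ℝ} (hπ : IsCoupling π μ ν) (y : V) :
    ∑ x, π x y = ν y := by
  rw [← tsum_fintype (L := .unconditional _)]; exact hπ.2.2 y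

theorem W1_le_of_isCoupling {π : V → V → ℝ} (hπ : IsCoupling π μ ν) :
    W1 H μ ν ≤ ∑ x, ∑ y, (H.dist x y : ℝ) * π x y := by
  have hbdd : BddBelow {c | ∃ π, IsCoupling π μ ν ∧
      c = ∑' p : V × V, (H.dist p.1 p.2 : ℝ) * π p.1 p.2} := by
    refine ⟨0, ?_⟩
    rintro _ ⟨π', hπ', rfl⟩
    exact tsum_nonneg fun _ => mul_nonneg (Nat.cast_nonneg _) (hπ'.1 _ _)
  refine (csInf_le hbdd ⟨π, hπ, rfl⟩).trans_eq ?_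
  rw [tsum_fintype, Fintype.sum_prod_type]

theorem le_W1 (hμ : IsProb μ) (hν : IsProb ν) {c : ℝ}
    (hc : ∀ π, IsCoupling π μ ν → c ≤ ∑ x, ∑ y, (H.dist x y : ℝ) * π x y) : c ≤ W1 H μ ν := by
  have hprod : IsCoupling (fun x y => μ x * ν y) μ ν :=
    ⟨fun x y => mul_nonneg (hμ.1 x) (hν.1 y), fun x => by rw [tsum_mul_left, hν.2.2, mul_one],
      fun y => by rw [tsum_mul_right, hμ.2.2, one_mul]⟩
  refine le_csInf ⟨_, _, hprod, rfl⟩ ?_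
  rintro _ ⟨π, hπ, rfl⟩
  rw [tsum_fintype, Fintype.sum_prod_type]
  exact hc π hπ

/-- The easy half of Kantorovich–Rubinstein duality. -/
theorem abs_sum_mul_sub_le_W1 (hμ : IsProb μ) (hν : IsProb ν) {f : V → ℝ}
    (hf : ∀ x y, |f x - f y| ≤ H.dist x y) :
    |∑ v, f v * ν v - ∑ v, f v * μ v| ≤ W1 H μ ν := by
  refine le_W1 H hμ hν fun π hπ => ?_
  have hsplit : ∑ v, f v * ν v - ∑ v, f v * μ v = ∑ x, ∑ y, (f y - f x) * π x y := by
    simp only [sub_mul, Finset.sum_sub_distrib, ← Finset.mul_sum, hπ.sum_right]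
    rw [Finset.sum_comm]
    simp only [← Finset.mul_sum, hπ.sum_left]
  rw [hsplit]
  refine (Finset.abs_sum_le_sum_abs _ _).trans <| Finset.sum_le_sum fun x _ =>
    (Finset.abs_sum_le_sum_abs _ _).trans <| Finset.sum_le_sum fun y _ => ?_
  rw [abs_mul, abs_of_nonneg (hπ.1 x y), abs_sub_comm]
  exact mul_le_mul_of_nonneg_right (hf x y) (hπ.1 x y)

theorem W1_le_of_move {a b : V} {δ : ℝ} (hδ : 0 ≤ δ) (hμ : ∀ v, 0 ≤ μ v) (hδa : δ ≤ μ a)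
    (hν : ∀ v, ν v = μ v + (if v = b then δ else 0) - (if v = a then δ else 0)) :
    W1 H μ ν ≤ H.dist a b * δ := by
  -- keep everything in place except `δ` of the mass at `a`, which is sent to `b`
  set π : V → V → ℝ := fun x y =>
    (if x = y then μ x - (if x = a then δ else 0) else 0) + if x = a ∧ y = b then δ else 0
  have hπ : IsCoupling π μ ν := by
    refine ⟨fun x y => ?_, fun x => ?_, fun y => ?_⟩
    · have := hμ x
      simp only [π]; split_ifs <;> simp_all
    · rw [tsum_fintype]
      simp [π, Finset.sum_add_distrib, Finset.sum_ite_eq, ite_and]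
    · rw [tsum_fintype]
      simp only [π, ite_and, Finset.sum_add_distrib, Finset.sum_ite_eq', Finset.mem_univ,
        if_true, hν y]
      ring
  refine (W1_le_of_isCoupling H hπ).trans_eq ?_
  simp [π, mul_add, Finset.sum_add_distrib, mul_ite, ite_and, H.dist_self]

theorem W1_le_one_of_support_subset_pair (hμ : IsProb μ) (hν : IsProb ν) {e : Set V}
    (he : e ∈ H.E) {a b : V} (ha : a ∈ e) (hb : b ∈ e) (hab : a ≠ b)
    (hsupp : Function.support (fun v => ν v - μ v) ⊆ {a, b}) : W1 H μ ν ≤ 1 := by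
  have hout : ∀ v, v ≠ a ∧ v ≠ b → ν v - μ v = 0 := fun v hv =>
    Function.notMem_support.1 fun hmem => by rcases hsupp hmem with h | h <;> simp_all
  have hbal : (ν a - μ a) + (ν b - μ b) = 0 := by
    rw [← Fintype.sum_eq_add a b hab hout, Finset.sum_sub_distrib, hν.sum_eq_one,
      hμ.sum_eq_one, sub_self]
  have hmove : ∀ v,
      ν v = μ v + (if v = b then ν b - μ b else 0) - (if v = a then ν b - μ b else 0) := fun v => by
    by_cases hva : v = a
    · subst hva; simp only [hab, if_true, if_false, add_zero]; linarith
    by_cases hvb : v = b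
    · simp [hvb, hab.symm]
    · simp only [hva, hvb, if_false, add_zero, sub_zero]; linarith [hout v ⟨hva, hvb⟩]
  rcases le_total 0 (ν b - μ b) with hd | hd
  · have hdist : (H.dist a b : ℝ) ≤ 1 := by exact_mod_cast H.dist_le_one he ha hb
    calc W1 H μ ν ≤ H.dist a b * (ν b - μ b) :=
          W1_le_of_move H hd hμ.1 (by linarith [hν.1 a]) hmove
      _ ≤ ν b - μ b := mul_le_of_le_one_left hd hdist
      _ ≤ 1 := by linarith [hν.le_one b, hμ.1 b]
  · have hdist : (H.dist b a : ℝ) ≤ 1 := by exact_mod_cast H.dist_le_one he hb ha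
    calc W1 H μ ν ≤ H.dist b a * (μ b - ν b) :=
          W1_le_of_move H (by linarith) hμ.1 (by linarith [hν.1 b]) fun v => by
            rw [hmove v]; split_ifs <;> ring
      _ ≤ μ b - ν b := mul_le_of_le_one_left (by linarith) hdist
      _ ≤ 1 := by linarith [hμ.le_one b, hν.1 b]

end Wasserstein

theorem rw_one {V : Type*} (H : HGraph V) (x : V) : rw H 1 x = dirac x := by
  funext v
  simp [rw, dirac]

theorem rw_eq_of_adj_iff {V : Type*} {H : HGraph V} {x y : V} (hy : ∀ v, H.Adj x v ↔ v = y)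
    (α : ℝ) : rw H α x = fun v => if v = x then α else if v = y then 1 - α else 0 := by
  have hdeg : H.degree x = 1 := by
    rw [HGraph.degree, show {v | H.Adj x v} = {y} from Set.ext hy, Set.ncard_singleton]
  funext v
  simp [rw, hy, hdeg]

theorem isProb_rw_of_adj_iff {V : Type*} [Fintype V] {H : HGraph V} {x y : V}
    (hy : ∀ v, H.Adj x v ↔ v = y) {α : ℝ} (hα : α ∈ Icc (0 : ℝ) 1) : IsProb (rw H α x) := by
  have hxy : x ≠ y := ((hy y).2 rfl).1
  rw [rw_eq_of_adj_iff hy]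
  refine IsProb.of_sum_eq_one (fun v => by split_ifs <;> linarith [hα.1, hα.2]) ?_
  rw [Fintype.sum_eq_add x y hxy fun v hv => by simp [hv.1, hv.2]]
  simp [hxy.symm]

theorem Fin.sum_ite_val_eq {n a : ℕ} (ha : a < n) (c : ℝ) :
    ∑ v : Fin n, (if (v : ℕ) = a then c else 0) = c := by
  rw [Fintype.sum_eq_single ⟨a, ha⟩ fun v hv => if_neg fun h => hv (Fin.ext h), if_pos rfl]

namespace PathGraph

variable {N : ℕ}

theorem adj_iff {x y : Fin (N + 1)} :
    (pathH N).Adj x y ↔ (x : ℕ) + 1 = y ∨ (y : ℕ) + 1 = x := by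
  constructor
  · rintro ⟨hxy, _, ⟨k, rfl⟩, hx, hy⟩
    simp only [Set.mem_insert_iff, Set.mem_singleton_iff, Fin.ext_iff, Fin.val_castSucc,
      Fin.val_succ] at hx hy
    omega
  · intro h
    refine ⟨fun hxy => by subst hxy; omega, ?_⟩
    rcases h with h | h
    · exact ⟨_, ⟨⟨x, by omega⟩, rfl⟩, Or.inl (Fin.ext rfl), Or.inr (Fin.ext h.symm)⟩
    · exact ⟨_, ⟨⟨y, by omega⟩, rfl⟩, Or.inr (Fin.ext h.symm), Or.inl (Fin.ext rfl)⟩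

theorem connected : (pathH N).Connected := by
  intro x y
  -- walk down from `x` to `0`, then up to `y`
  let f : ℕ → Fin (N + 1) := fun t => ⟨if t ≤ x then x - t else min (t - x) y, by
    have := x.isLt; have := y.isLt; split_ifs <;> omega⟩
  refine ⟨x + y, f, Fin.ext (by simp [f]), Fin.ext (by simp only [f]; split_ifs <;> omega),
    fun i hi => (adj_iff.2 ?_).2⟩
  simp only [f]
  split_ifs <;> omega

theorem adj_zero_iff (hN : 1 ≤ N) (v : Fin (N + 1)) :
    (pathH N).Adj 0 v ↔ v = ⟨1, by omega⟩ := by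
  rw [adj_iff, Fin.ext_iff]; simp only [Fin.val_zero]; omega

theorem adj_last_iff (hN : 1 ≤ N) (v : Fin (N + 1)) :
    (pathH N).Adj (Fin.last N) v ↔ v = ⟨N - 1, by omega⟩ := by
  rw [adj_iff, Fin.ext_iff]; simp only [Fin.val_last]; omega

theorem rw_zero_apply (hN : 1 ≤ N) (α : ℝ) (v : Fin (N + 1)) :
    rw (pathH N) α 0 v = if (v : ℕ) = 0 then α else if (v : ℕ) = 1 then 1 - α else 0 := by
  rw [rw_eq_of_adj_iff (adj_zero_iff hN)]
  simp only [Fin.ext_iff, Fin.val_zero]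

theorem rw_last_apply (hN : 1 ≤ N) (α : ℝ) (v : Fin (N + 1)) :
    rw (pathH N) α (Fin.last N) v =
      if (v : ℕ) = N then α else if (v : ℕ) + 1 = N then 1 - α else 0 := by
  rw [rw_eq_of_adj_iff (adj_last_iff hN)]
  simp only [Fin.ext_iff, Fin.val_last]
  split_ifs <;> first | (exfalso; omega) | rfl

/-- The mass of `μ` to the right of the edge `{j, j + 1}`. -/
noncomputable def cutMass (μ : Fin (N + 1) → ℝ) (j : ℕ) : ℝ := ∑ v with j < v.val, μ v

theorem cutMass_mem_Icc {μ : Fin (N + 1) → ℝ} (hμ : IsProb μ) (j : ℕ) :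
    cutMass μ j ∈ Icc (0 : ℝ) 1 :=
  ⟨Finset.sum_nonneg fun v _ => hμ.1 v, hμ.sum_eq_one ▸
    Finset.sum_le_sum_of_subset_of_nonneg (Finset.filter_subset _ _) fun v _ _ => hμ.1 v⟩

theorem abs_cutMass_sub_le_W1 {μ ν : Fin (N + 1) → ℝ} (hμ : IsProb μ) (hν : IsProb ν)
    (j : ℕ) : |cutMass ν j - cutMass μ j| ≤ W1 (pathH N) μ ν := by
  have hlip : ∀ x y : Fin (N + 1), |(if j < (x : ℕ) then (1 : ℝ) else 0) -
      (if j < (y : ℕ) then 1 else 0)| ≤ (pathH N).dist x y := fun x y => by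
    rcases eq_or_ne x y with rfl | hxy
    · simp
    · calc _ ≤ (1 : ℝ) := by split_ifs <;> norm_num
        _ ≤ _ := by exact_mod_cast HGraph.one_le_dist connected hxy
  simpa [cutMass, Finset.sum_filter] using abs_sum_mul_sub_le_W1 (pathH N) hμ hν hlip

theorem cutMass_eq_of_support_subset {μ ν : Fin (N + 1) → ℝ} (hμ : IsProb μ) (hν : IsProb ν)
    {k : Fin N} (hsupp : Function.support (fun v => ν v - μ v) ⊆ {k.castSucc, k.succ})
    {j : ℕ} (hj : j ≠ k) : cutMass ν j = cutMass μ j := by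
  have hzero : ∀ v : Fin (N + 1), (v : ℕ) ≠ k → (v : ℕ) ≠ k + 1 → ν v - μ v = 0 :=
    fun v h1 h2 => Function.notMem_support.1 fun hv => by
      rcases hsupp hv with h | h <;>
        simp only [Set.mem_singleton_iff, Fin.ext_iff, Fin.val_castSucc, Fin.val_succ] at h <;>
        omega
  rw [← sub_eq_zero, cutMass, cutMass, ← Finset.sum_sub_distrib]
  rcases Nat.lt_or_gt_of_ne hj with hjk | hkj
  · -- the whole edge lies right of the cut, so the cut sees all of the (zero) change in mass
    rw [Finset.sum_filter_of_ne fun v _ hv => ?_, Finset.sum_sub_distrib, hν.sum_eq_one,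
      hμ.sum_eq_one, sub_self]
    by_contra hvj
    exact hv (hzero v (by omega) (by omega))
  · exact Finset.sum_eq_zero fun v hv =>
      have hjv := (Finset.mem_filter.1 hv).2
      hzero v (by omega) (by omega)

theorem cutMass_rw_zero (hN : 1 ≤ N) (α : ℝ) (j : ℕ) :
    cutMass (rw (pathH N) α 0) j = if j = 0 then 1 - α else 0 := by
  rw [cutMass, Finset.sum_filter]
  refine (Finset.sum_congr rfl fun v _ => ?_).trans (Fin.sum_ite_val_eq (n := N + 1) (a := 1)
    (by omega) (if j = 0 then 1 - α else 0))
  rw [rw_zero_apply hN]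
  split_ifs <;> first | (exfalso; omega) | rfl

theorem cutMass_rw_last (hN : 1 ≤ N) (α : ℝ) {j : ℕ} (hj : j < N) :
    cutMass (rw (pathH N) α (Fin.last N)) j = if j + 1 = N then α else 1 := by
  have hsplit : ∀ v : Fin (N + 1), (if j < (v : ℕ) then rw (pathH N) α (Fin.last N) v else 0) =
      (if (v : ℕ) = N then α else 0) +
        if (v : ℕ) = N - 1 then (if j + 1 = N then 0 else 1 - α) else 0 := fun v => by
    rw [rw_last_apply hN]
    split_ifs <;> first | (exfalso; omega) | ring
  rw [cutMass, Finset.sum_filter, Finset.sum_congr rfl fun v _ => hsplit v,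
    Finset.sum_add_distrib, Fin.sum_ite_val_eq (by omega), Fin.sum_ite_val_eq (by omega)]
  split_ifs <;> ring

section Admissible

variable {μ ν : Fin (N + 1) → ℝ} {I : ℕ} {ξ : ℕ → Fin (N + 1) → ℝ}

theorem W1_mem_Icc_of_admissible (hadm : WhAdmissible (pathH N) μ ν I ξ) {i : ℕ} (hi : i < I) :
    W1 (pathH N) (ξ i) (ξ (i + 1)) ∈ Icc (0 : ℝ) 1 := by
  obtain ⟨e, ⟨k, rfl⟩, hsupp⟩ := hadm.2.2.2 i hi
  exact ⟨W1_nonneg _, W1_le_one_of_support_subset_pair _ (hadm.2.2.1 i hi.le)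
    (hadm.2.2.1 (i + 1) hi) ⟨k, rfl⟩ (Set.mem_insert _ _) (Set.mem_insert_of_mem _ rfl)
    Fin.castSucc_lt_succ.ne hsupp⟩

theorem abs_cutMass_sub_le_sum_W1 (hadm : WhAdmissible (pathH N) μ ν I ξ) {k : Fin I → Fin N}
    (hk : ∀ i : Fin I,
      Function.support (fun v => ξ (i + 1) v - ξ i v) ⊆ {(k i).castSucc, (k i).succ})
    (j : Fin N) :
    |cutMass ν j - cutMass μ j| ≤ ∑ i with k i = j, W1 (pathH N) (ξ i) (ξ (i + 1)) := by
  obtain ⟨rfl, rfl, hprob, -⟩ := hadm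
  have htelescope : cutMass (ξ I) j - cutMass (ξ 0) j =
      ∑ i : Fin I, (cutMass (ξ (i + 1)) j - cutMass (ξ i) j) := by
    rw [Fin.sum_univ_eq_sum_range (fun i => cutMass (ξ (i + 1)) j - cutMass (ξ i) j),
      Finset.sum_range_sub fun i => cutMass (ξ i) j]
  -- only the steps across the edge `{j, j + 1}` move mass over the cut
  rw [htelescope, ← Finset.sum_filter_of_ne (p := fun i => k i = j) fun i _ hne => ?_]
  · exact (Finset.abs_sum_le_sum_abs _ _).trans <| Finset.sum_le_sum fun i _ =>
      abs_cutMass_sub_le_W1 (hprob i i.2.le) (hprob (i + 1) i.2) j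
  · by_contra hij
    exact hne <| sub_eq_zero.2 <| cutMass_eq_of_support_subset (hprob i i.2.le)
      (hprob (i + 1) i.2) (hk i) fun h => hij (Fin.ext h).symm

variable {f : ℝ → ℝ}

theorem sum_apply_abs_cutMass_sub_le (hf : ConcaveOn ℝ (Icc 0 1) f) (h0 : f 0 = 0)
    (hmono : MonotoneOn f (Icc 0 1)) (hadm : WhAdmissible (pathH N) μ ν I ξ) :
    ∑ j : Fin N, f |cutMass ν j - cutMass μ j| ≤
      ∑ i ∈ Finset.range I, f (W1 (pathH N) (ξ i) (ξ (i + 1))) := by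
  have hedge : ∀ i : Fin I, ∃ k : Fin N,
      Function.support (fun v => ξ (i + 1) v - ξ i v) ⊆ {k.castSucc, k.succ} := fun i => by
    obtain ⟨_, ⟨k, rfl⟩, hsupp⟩ := hadm.2.2.2 i i.2
    exact ⟨k, hsupp⟩
  choose k hk using hedge
  have hμ : IsProb μ := hadm.1 ▸ hadm.2.2.1 0 (Nat.zero_le I)
  have hν : IsProb ν := hadm.2.1 ▸ hadm.2.2.1 I le_rfl
  rw [← Fin.sum_univ_eq_sum_range (fun i => f (W1 (pathH N) (ξ i) (ξ (i + 1)))),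
    ← Finset.sum_fiberwise Finset.univ k]
  refine Finset.sum_le_sum fun j _ => hf.le_sum_of_le_sum h0 hmono _
    (fun i _ => W1_mem_Icc_of_admissible hadm i.2) ⟨abs_nonneg _, ?_⟩
    (abs_cutMass_sub_le_sum_W1 hadm hk j)
  obtain ⟨hν0, hν1⟩ := cutMass_mem_Icc hν j
  obtain ⟨hμ0, hμ1⟩ := cutMass_mem_Icc hμ j
  exact abs_sub_le_of_nonneg_of_le hν0 hν1 hμ0 hμ1

theorem Wh_le_of_admissible (hf0 : ∀ x ∈ Icc (0 : ℝ) 1, 0 ≤ f x)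
    (hadm : WhAdmissible (pathH N) μ ν I ξ) :
    Wh (pathH N) f μ ν ≤ ∑ i ∈ Finset.range I, f (W1 (pathH N) (ξ i) (ξ (i + 1))) := by
  refine csInf_le ⟨0, ?_⟩ ⟨I, ξ, hadm, rfl⟩
  rintro _ ⟨I', ξ', hadm', rfl⟩
  exact Finset.sum_nonneg fun i hi =>
    hf0 _ (W1_mem_Icc_of_admissible hadm' (Finset.mem_range.1 hi))

end Admissible

variable {α : ℝ}

/-- The mass an optimal plan between the endpoint walks sends across the edge `{i, i + 1}`. -/
noncomputable def stepCost (N : ℕ) (α : ℝ) (i : ℕ) : ℝ := if i = 0 ∨ i + 1 = N then α else 1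

theorem stepCost_mem_Icc (hα : α ∈ Icc (0 : ℝ) 1) (i : ℕ) : stepCost N α i ∈ Icc (0 : ℝ) 1 := by
  unfold stepCost; split_ifs
  exacts [hα, ⟨zero_le_one, le_rfl⟩]

theorem abs_cutMass_rw_sub (hN : 2 ≤ N) (hα : 0 ≤ α) {j : ℕ} (hj : j < N) :
    |cutMass (rw (pathH N) α (Fin.last N)) j - cutMass (rw (pathH N) α 0) j| =
      stepCost N α j := by
  rw [cutMass_rw_last (by omega) α hj, cutMass_rw_zero (by omega), stepCost]
  split_ifs <;> first | (exfalso; omega) | simp [abs_of_nonneg hα]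

theorem sum_range_stepCost (hN : 2 ≤ N) (f : ℝ → ℝ) (α : ℝ) :
    ∑ i ∈ Finset.range N, f (stepCost N α i) = N * f 1 - 2 * (f 1 - f α) := by
  obtain ⟨M, rfl⟩ : ∃ M, N = M + 2 := ⟨N - 2, by omega⟩
  have hmid : ∀ i ∈ Finset.range M, f (stepCost (M + 2) α (i + 1)) = f 1 := fun i hi => by
    rw [stepCost, if_neg (by have := Finset.mem_range.1 hi; omega)]
  rw [Finset.sum_range_succ, Finset.sum_range_succ', Finset.sum_congr rfl hmid,
    Finset.sum_const, Finset.card_range, nsmul_eq_mul, stepCost, stepCost, if_pos (by omega),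
    if_pos (by omega)]
  push_cast
  ring

/-- Move `α` from `0` to `1`, carry the unit mass from `1` to `N - 1`, then move `α` on to `N`. -/
noncomputable def endpointChain (N : ℕ) (α : ℝ) (i : ℕ) : Fin (N + 1) → ℝ :=
  if i = 0 then rw (pathH N) α 0
  else if i < N then fun v => if (v : ℕ) = i then 1 else 0
  else rw (pathH N) α (Fin.last N)

theorem endpointChain_succ_apply (hN : 2 ≤ N) {i : ℕ} (hi : i < N) (v : Fin (N + 1)) :
    endpointChain N α (i + 1) v = endpointChain N α i v +
      (if (v : ℕ) = i + 1 then stepCost N α i else 0) -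
        (if (v : ℕ) = i then stepCost N α i else 0) := by
  unfold endpointChain stepCost
  split_ifs <;> simp only [rw_zero_apply (by omega : 1 ≤ N), rw_last_apply (by omega : 1 ≤ N)] <;>
    split_ifs <;> first | (exfalso; omega) | ring

theorem isProb_endpointChain (hN : 2 ≤ N) (hα : α ∈ Icc (0 : ℝ) 1) {i : ℕ} (hi : i ≤ N) :
    IsProb (endpointChain N α i) := by
  unfold endpointChain
  split_ifs with h0 hlt
  · exact isProb_rw_of_adj_iff (adj_zero_iff (by omega)) hα
  · exact IsProb.of_sum_eq_one (fun v => by split_ifs <;> norm_num)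
      (Fin.sum_ite_val_eq (by omega) 1)
  · exact isProb_rw_of_adj_iff (adj_last_iff (by omega)) hα

theorem endpointChain_admissible (hN : 2 ≤ N) (hα : α ∈ Icc (0 : ℝ) 1) :
    WhAdmissible (pathH N) (rw (pathH N) α 0) (rw (pathH N) α (Fin.last N)) N
      (endpointChain N α) := by
  refine ⟨by simp [endpointChain], by rw [endpointChain, if_neg (by omega), if_neg (by omega)],
    fun i hi => isProb_endpointChain hN hα hi,
    fun i hi => ⟨_, ⟨⟨i, hi⟩, rfl⟩, fun v hv => ?_⟩⟩
  rw [Function.mem_support, endpointChain_succ_apply hN hi] at hv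
  simp only [Set.mem_insert_iff, Set.mem_singleton_iff, Fin.ext_iff, Fin.val_castSucc,
    Fin.val_succ]
  by_contra hvi
  rw [not_or] at hvi
  exact hv (by rw [if_neg hvi.2, if_neg hvi.1]; ring)

theorem W1_endpointChain_le (hN : 2 ≤ N) (hα : α ∈ Icc (0 : ℝ) 1) {i : ℕ} (hi : i < N) :
    W1 (pathH N) (endpointChain N α i) (endpointChain N α (i + 1)) ≤ stepCost N α i := by
  have hδ := stepCost_mem_Icc (N := N) hα i
  have hmass : stepCost N α i ≤ endpointChain N α i ⟨i, by omega⟩ := by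
    unfold endpointChain stepCost
    split_ifs <;> simp_all [rw_zero_apply (by omega : 1 ≤ N)]
  have hdist : ((pathH N).dist ⟨i, by omega⟩ ⟨i + 1, by omega⟩ : ℝ) ≤ 1 := by
    exact_mod_cast (pathH N).dist_le_one ⟨⟨i, hi⟩, rfl⟩ (Set.mem_insert _ _)
      (Set.mem_insert_of_mem _ rfl)
  calc _ ≤ ((pathH N).dist ⟨i, by omega⟩ ⟨i + 1, by omega⟩ : ℝ) * stepCost N α i :=
        W1_le_of_move _ hδ.1 (isProb_endpointChain hN hα hi.le).1 hmass fun v => by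
          simp only [endpointChain_succ_apply hN hi, Fin.ext_iff]
    _ ≤ stepCost N α i := mul_le_of_le_one_left hδ.1 hdist

theorem Wh_rw_zero_last (hN : 2 ≤ N) {f : ℝ → ℝ} (hf : ConcaveOn ℝ (Icc 0 1) f)
    (h0 : f 0 = 0) (hmono : MonotoneOn f (Icc 0 1)) (hα : α ∈ Icc (0 : ℝ) 1) :
    Wh (pathH N) f (rw (pathH N) α 0) (rw (pathH N) α (Fin.last N)) =
      ∑ i ∈ Finset.range N, f (stepCost N α i) := by
  have hadm := endpointChain_admissible hN hα
  refine le_antisymm ?_ (le_csInf ⟨_, N, _, hadm, rfl⟩ ?_)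
  · refine (Wh_le_of_admissible (fun x hx => hmono.nonneg_of_apply_zero h0 hx) hadm).trans <|
      Finset.sum_le_sum fun i hi => ?_
    have hi := Finset.mem_range.1 hi
    exact hmono (W1_mem_Icc_of_admissible hadm hi) (stepCost_mem_Icc hα i)
      (W1_endpointChain_le hN hα hi)
  · rintro _ ⟨I, ξ, hadmξ, rfl⟩
    refine le_of_eq_of_le ?_ (sum_apply_abs_cutMass_sub_le hf h0 hmono hadmξ)
    rw [← Fin.sum_univ_eq_sum_range]
    exact Finset.sum_congr rfl fun j _ => by rw [abs_cutMass_rw_sub hN hα.1 j.2]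

end PathGraph

theorem CostFn.apply_one_pos {h : ℝ → ℝ} {D0 D1 : ℝ} (hc : CostFn h D0 D1) : 0 < h 1 := by
  obtain ⟨t, hpos, ht⟩ :=
    (((tendsto_order.1 hc.d0).1 0 hc.d0_pos).and (Ioo_mem_nhdsGT one_pos)).exists
  exact ((div_pos_iff_of_pos_right ht.1).1 hpos).trans_le
    (hc.mono ⟨ht.1.le, ht.2.le⟩ ⟨zero_le_one, le_rfl⟩ ht.2.le)

/-- Transport distance between lazy random walks at the two endpoints of the
path graph, and the resulting `h`-LLY–Ricci curvature. -/
theorem curvature_path_graph (N : ℕ) (hN : 2 ≤ N)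
    (h : ℝ → ℝ) (D0 D1 : ℝ) (hc : CostFn h D0 D1) :
    (∀ α ∈ Set.Icc (0 : ℝ) 1,
      Wh (pathH N) h (rw (pathH N) α 0) (rw (pathH N) α (Fin.last N)) =
        (N : ℝ) * h 1 - 2 * (h 1 - h α)) ∧
    hLLY (pathH N) h 0 (Fin.last N) = 2 * D1 / ((N : ℝ) * h 1) := by
  have hWh : ∀ α ∈ Icc (0 : ℝ) 1, Wh (pathH N) h (rw (pathH N) α 0)
      (rw (pathH N) α (Fin.last N)) = N * h 1 - 2 * (h 1 - h α) := fun α hα => by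
    rw [PathGraph.Wh_rw_zero_last hN hc.concave hc.zero hc.mono hα,
      PathGraph.sum_range_stepCost hN]
  refine ⟨hWh, ?_⟩
  have hN0 : (N : ℝ) ≠ 0 := by exact_mod_cast (by omega : N ≠ 0)
  have h1 : h 1 ≠ 0 := hc.apply_one_pos.ne'
  have hdirac : Wh (pathH N) h (dirac 0) (dirac (Fin.last N)) = N * h 1 := by
    simpa [rw_one] using hWh 1 (right_mem_Icc.2 zero_le_one)
  have hratio : (fun α => ORic (pathH N) h α 0 (Fin.last N) / (1 - α)) =ᶠ[𝓝[<] 1]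
      fun α => 2 / (N * h 1) * ((h 1 - h α) / (1 - α)) := by
    filter_upwards [Ioo_mem_nhdsLT one_pos] with α hα
    have h1α : 1 - α ≠ 0 := (sub_pos.2 hα.2).ne'
    rw [ORic, hWh α ⟨hα.1.le, hα.2.le⟩, hdirac]
    field_simp
    ring
  rw [hLLY, liminf_congr hratio, (hc.d1.const_mul _).liminf_eq]
  field_simp
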